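/- arXiv:2605.30927 — 4 statements merged into one kernel-verified Lean document; each statement's English description precedes it below -/
import Mathlib

section
/- Let Ψ : K(ℝ^n) → C(S^{n-1},ℂ)' be a measure-valued functional that is weak*-continuous and locally determined. Then Ψ is a valuation: for all convex bodies K, L ∈ K(ℝ^n) such that K ∪ L is convex, the intersection K ∩ L is nonempty (hence a convex body) and Ψ(K ∪ L) + Ψ(K ∩ L) = Ψ(K) + Ψ(L) as continuous linear functionals on C(S^{n-1},ℂ). -/
open scoped RealInnerProductSpace Pointwise
open Metric

noncomputable section

/-- `ℝⁿ` with the Euclidean inner product. -/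
abbrev En (n : ℕ) : Type := EuclideanSpace ℝ (Fin n)

/-- The unit sphere `S^{n-1} ⊆ ℝⁿ`. -/
abbrev Sph (n : ℕ) : Type := Metric.sphere (0 : En n) 1

/-- The support function of a set in `ℝⁿ`. -/
def suppFn {n : ℕ} (A : Set (En n)) (v : En n) : ℝ :=
  sSup ((fun x => ⟪x, v⟫) '' A)

/-- Measure-valued functionals: maps from convex bodies to continuous linear functionals on
`C(S^{n-1}, ℂ)` (identified with finite complex Borel measures by Riesz representation). -/
abbrev AreaFun (n : ℕ) : Type := ConvexBody (En n) → (C(Sph n, ℂ) →L[ℂ] ℂ)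

/-- Weak* continuity of a measure-valued functional. -/
def WeakContinuous {n : ℕ} (Ψ : AreaFun n) : Prop :=
  ∀ φ : C(Sph n, ℂ), Continuous fun K : ConvexBody (En n) => Ψ K φ

/-- A measure-valued functional is locally determined if `Ψ(K;φ) = Ψ(L;φ)` whenever the support
functions of `K` and `L` agree on an open set `U ⊆ S^{n-1}` containing the support of `φ`. -/
def LocallyDetermined {n : ℕ} (Ψ : AreaFun n) : Prop :=
  ∀ (K L : ConvexBody (En n)) (φ : C(Sph n, ℂ)) (U : Set (Sph n)), IsOpen U →
    (∀ v ∈ U, suppFn (K : Set (En n)) (v : En n) = suppFn (L : Set (En n)) (v : En n)) →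
    tsupport φ ⊆ U → Ψ K φ = Ψ L φ

/-!
Write `M = K ∪ L` and `N = K ∩ L`. Then `h_M = max h_K h_L`, and since `M` is convex, every segment
from a point of `K` to a point of `L` meets `N`, which gives `N ≠ ∅` and `h_N = min h_K h_L`.
If the four support functions were locally ordered, i.e. every direction had a neighbourhood on
which `h_K ≤ h_L` or `h_L ≤ h_K`, then on such a neighbourhood `{M, N}` and `{K, L}` would have the
same support functions, and local determination together with a partition of unity would give the
valuation identity. This fails where `h_K = h_L`, so we test against `φ` supported in a hemisphere
`⟪u, ·⟫ > 0` (again a partition of unity reduces to this case) and replace every body `X` by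
`conv (X ∪ (N + t • u))`, `t > 0`, whose support function is `max h_X (h_N + t ⟪u, ·⟫)`. The new
bodies satisfy the same max/min relations, and where `h_K = h_L = h_N` the added term now strictly
dominates, so they are locally ordered on the hemisphere. Letting `t → 0`, the perturbed bodies
converge to the original ones and weak* continuity concludes.
-/

open Set Filter Topology

theorem Convex.exists_mem_segment_inter_of_union {E : Type*} [AddCommGroup E] [Module ℝ E]
    [TopologicalSpace E] [IsTopologicalAddGroup E] [ContinuousSMul ℝ E] {A B : Set E}
    (hA : IsClosed A) (hB : IsClosed B) (hAB : Convex ℝ (A ∪ B)) {x z : E} (hx : x ∈ A)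
    (hz : z ∈ B) : ∃ y ∈ segment ℝ x z, y ∈ A ∩ B :=
  isPreconnected_closed_iff.mp (convex_segment x z).isPreconnected A B hA hB
    (hAB.segment_subset (.inl hx) (.inr hz)) ⟨x, left_mem_segment ℝ x z, hx⟩
    ⟨z, right_mem_segment ℝ x z, hz⟩

theorem IsCompact.convexJoin {E : Type*} [AddCommGroup E] [Module ℝ E]
    [TopologicalSpace E] [IsTopologicalAddGroup E] [ContinuousSMul ℝ E] {s t : Set E}
    (hs : IsCompact s) (ht : IsCompact t) : IsCompact (_root_.convexJoin ℝ s t) := by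
  have himage : _root_.convexJoin ℝ s t =
      (fun p : ℝ × E × E => (1 - p.1) • p.2.1 + p.1 • p.2.2) '' (Icc 0 1 ×ˢ s ×ˢ t) := by
    ext y
    simp only [mem_convexJoin, segment_eq_image, mem_image, mem_prod, Prod.exists]
    aesop
  rw [himage]
  exact (isCompact_Icc.prod (hs.prod ht)).image (by fun_prop)

theorem map_eq_map_of_tsupport_subset_iUnion {X E M F ι : Type*} [TopologicalSpace X]
    [CompactSpace X] [T2Space X] [AddCommGroup E] [Module ℝ E] [TopologicalSpace E]
    [ContinuousAdd E] [ContinuousSMul ℝ E] [AddCommMonoid M] [FunLike F C(X, E) M]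
    [AddMonoidHomClass F C(X, E) M] (Λ₁ Λ₂ : F) {U : ι → Set X} (hU : ∀ i, IsOpen (U i))
    (hΛ : ∀ i (φ : C(X, E)), tsupport φ ⊆ U i → Λ₁ φ = Λ₂ φ) {ψ : C(X, E)}
    (hψ : tsupport ψ ⊆ ⋃ i, U i) : Λ₁ ψ = Λ₂ ψ := by
  obtain ⟨t, ht⟩ := (isClosed_tsupport ψ).isCompact.elim_finite_subcover U hU hψ
  obtain ⟨f, hf⟩ := PartitionOfUnity.exists_isSubordinate (isClosed_tsupport ψ)
    (fun i : t => U i) (fun i => hU i) (by rwa [iUnion_subtype])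
  have hsum : ψ = ∑ i : t, f i • ψ := by
    ext x
    simp only [ContinuousMap.sum_apply, ContinuousMap.smul_apply', ← Finset.sum_smul]
    by_cases hx : x ∈ tsupport ψ
    · rw [← finsum_eq_sum_of_fintype, f.sum_eq_one hx, one_smul]
    · rw [image_eq_zero_of_notMem_tsupport hx, smul_zero]
  rw [hsum, map_sum, map_sum]
  exact Finset.sum_congr rfl fun i _ => hΛ i _ ((tsupport_smul_subset_left _ _).trans (hf i))

namespace ConvexBody

section TopologicalVectorSpace

variable {V : Type*} [AddCommGroup V] [Module ℝ V] [TopologicalSpace V] [IsTopologicalAddGroup V]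

instance : VAdd V (ConvexBody V) where
  vadd w K := ⟨w +ᵥ (K : Set V), K.convex.vadd w,
    by simpa only [image_vadd] using K.isCompact.image (continuous_const_vadd w),
    K.nonempty.vadd_set⟩

@[simp]
theorem coe_vadd (w : V) (K : ConvexBody V) :
    ((w +ᵥ K : ConvexBody V) : Set V) = w +ᵥ (K : Set V) :=
  rfl

variable [ContinuousSMul ℝ V]

def join (K L : ConvexBody V) : ConvexBody V :=
  ⟨convexJoin ℝ K L, K.convex.convexJoin L.convex, K.isCompact.convexJoin L.isCompact,
    K.nonempty.mono (subset_convexJoin_left L.nonempty)⟩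

@[simp]
theorem coe_join (K L : ConvexBody V) : (K.join L : Set V) = convexJoin ℝ K L :=
  rfl

end TopologicalVectorSpace

section Normed

variable {V : Type*} [NormedAddCommGroup V] [NormedSpace ℝ V]

theorem dist_join_vadd_le {K N : ConvexBody V} (hNK : (N : Set V) ⊆ K) (w : V) :
    dist (K.join (w +ᵥ N)) K ≤ ‖w‖ := by
  rw [← hausdorffDist_coe]
  refine Metric.hausdorffDist_le_of_mem_dist (norm_nonneg w) ?_ fun x hx =>
    ⟨x, subset_convexJoin_left (w +ᵥ N).nonempty hx, by simp⟩
  simp only [coe_join, coe_vadd, mem_convexJoin, Set.mem_vadd_set, vadd_eq_add]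
  rintro _ ⟨a, ha, _, ⟨b, hb, rfl⟩, s, t, hs, ht, hst, rfl⟩
  refine ⟨s • a + t • b, K.convex ha (hNK hb) hs ht hst, ?_⟩
  rw [dist_eq_norm, smul_add, add_sub_add_left_eq_sub, add_comm, add_sub_cancel_left, norm_smul,
    Real.norm_of_nonneg ht]
  exact mul_le_of_le_one_left (norm_nonneg w) (by linarith)

theorem tendsto_join_vadd {K N : ConvexBody V} (hNK : (N : Set V) ⊆ K) :
    Tendsto (fun w : V => K.join (w +ᵥ N)) (𝓝 0) (𝓝 K) :=
  tendsto_iff_dist_tendsto_zero.2 <| squeeze_zero (fun _ => dist_nonneg)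
    (fun w => dist_join_vadd_le hNK w) tendsto_norm_zero

end Normed

end ConvexBody

section SupportFunction

variable {n : ℕ} {A B : Set (En n)}

theorem le_suppFn (hA : IsCompact A) {x : En n} (hx : x ∈ A) (v : En n) : ⟪x, v⟫ ≤ suppFn A v :=
  le_csSup (hA.image (by fun_prop)).bddAbove (mem_image_of_mem _ hx)

theorem suppFn_le (hA : A.Nonempty) {v : En n} {c : ℝ} (h : ∀ x ∈ A, ⟪x, v⟫ ≤ c) :
    suppFn A v ≤ c :=
  csSup_le (hA.image _) (forall_mem_image.2 h)

theorem exists_inner_eq_suppFn (hA : IsCompact A) (hne : A.Nonempty) (v : En n) :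
    ∃ x ∈ A, ⟪x, v⟫ = suppFn A v :=
  (hA.image (by fun_prop)).sSup_mem (hne.image _)

theorem continuous_suppFn (hA : IsCompact A) : Continuous (suppFn A) :=
  hA.continuous_sSup (f := fun v x => ⟪x, v⟫) (by fun_prop)

theorem suppFn_union (hA : IsCompact A) (hAne : A.Nonempty) (hB : IsCompact B)
    (hBne : B.Nonempty) (v : En n) : suppFn (A ∪ B) v = max (suppFn A v) (suppFn B v) := by
  rw [suppFn, image_union, csSup_union (hA.image (by fun_prop)).bddAbove (hAne.image _)
    (hB.image (by fun_prop)).bddAbove (hBne.image _)]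
  rfl

theorem suppFn_vadd (hA : IsCompact A) (hne : A.Nonempty) (w v : En n) :
    suppFn (w +ᵥ A) v = ⟪w, v⟫ + suppFn A v := by
  obtain ⟨x, hx, hxv⟩ := exists_inner_eq_suppFn hA hne v
  refine le_antisymm (suppFn_le hne.vadd_set ?_) ?_
  · rintro _ ⟨y, hy, rfl⟩
    simp only [vadd_eq_add, inner_add_left]
    linarith [le_suppFn hA hy v]
  · rw [← hxv, ← inner_add_left]
    exact le_suppFn (by simpa only [image_vadd] using hA.image (continuous_const_vadd w))
      (vadd_mem_vadd_set hx) v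

theorem suppFn_convexJoin (hA : IsCompact A) (hAne : A.Nonempty) (hB : IsCompact B)
    (hBne : B.Nonempty) (v : En n) :
    suppFn (convexJoin ℝ A B) v = max (suppFn A v) (suppFn B v) := by
  have hJ := hA.convexJoin hB
  refine le_antisymm (suppFn_le (hAne.mono (subset_convexJoin_left hBne)) ?_)
    (max_le (suppFn_le hAne fun x hx => le_suppFn hJ (subset_convexJoin_left hBne hx) v)
      (suppFn_le hBne fun x hx => le_suppFn hJ (subset_convexJoin_right hAne hx) v))
  intro x hx
  obtain ⟨a, ha, b, hb, hx⟩ := mem_convexJoin.1 hx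
  exact (((innerₗ (En n)).flip v).convexOn convex_univ).le_on_segment (mem_univ a) (mem_univ b) hx
    |>.trans (max_le_max (le_suppFn hA ha v) (le_suppFn hB hb v))

theorem suppFn_inter_of_convex_union (hA : IsCompact A) (hAne : A.Nonempty) (hB : IsCompact B)
    (hBne : B.Nonempty) (hAB : Convex ℝ (A ∪ B)) (v : En n) :
    suppFn (A ∩ B) v = min (suppFn A v) (suppFn B v) := by
  obtain ⟨x, hx, hxv⟩ := exists_inner_eq_suppFn hA hAne v
  obtain ⟨z, hz, hzv⟩ := exists_inner_eq_suppFn hB hBne v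
  obtain ⟨y, hy, hyAB⟩ := hAB.exists_mem_segment_inter_of_union hA.isClosed hB.isClosed hx hz
  refine le_antisymm (le_min (suppFn_le ⟨y, hyAB⟩ fun x hx => le_suppFn hA hx.1 v)
    (suppFn_le ⟨y, hyAB⟩ fun x hx => le_suppFn hB hx.2 v)) ?_
  rw [← hxv, ← hzv]
  exact (((innerₗ (En n)).flip v).concaveOn convex_univ).ge_on_segment (mem_univ x) (mem_univ z) hy
    |>.trans (le_suppFn (hA.inter_right hB.isClosed) hyAB v)

theorem suppFn_join_vadd (X N : ConvexBody (En n)) (w v : En n) :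
    suppFn (X.join (w +ᵥ N) : Set (En n)) v = max (suppFn X v) (⟪w, v⟫ + suppFn N v) := by
  rw [ConvexBody.coe_join, suppFn_convexJoin X.isCompact X.nonempty (w +ᵥ N).isCompact
    (w +ᵥ N).nonempty, ConvexBody.coe_vadd, suppFn_vadd N.isCompact N.nonempty]

end SupportFunction

section Valuation

variable {n : ℕ} {Ψ : AreaFun n}

theorem LocallyDetermined.add_eq_of_suppFn_le (hΨ : LocallyDetermined Ψ)
    {A B C D : ConvexBody (En n)}
    (hC : ∀ v, suppFn (C : Set (En n)) v = max (suppFn A v) (suppFn B v))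
    (hD : ∀ v, suppFn (D : Set (En n)) v = min (suppFn A v) (suppFn B v))
    {U : Set (Sph n)} (hU : IsOpen U)
    (hBA : ∀ v ∈ U, suppFn (B : Set (En n)) (v : En n) ≤ suppFn (A : Set (En n)) v)
    {φ : C(Sph n, ℂ)} (hφ : tsupport φ ⊆ U) : Ψ C φ + Ψ D φ = Ψ A φ + Ψ B φ := by
  rw [hΨ C A φ U hU (fun v hv => by rw [hC, max_eq_left (hBA v hv)]) hφ,
    hΨ D B φ U hU (fun v hv => by rw [hD, min_eq_right (hBA v hv)]) hφ]

theorem LocallyDetermined.add_eq_join_vadd (hΨ : LocallyDetermined Ψ)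
    {K L M N : ConvexBody (En n)} (hM : (M : Set (En n)) = (K : Set (En n)) ∪ L)
    (hN : (N : Set (En n)) = (K : Set (En n)) ∩ L)
    {w : En n} {ψ : C(Sph n, ℂ)} (hψ : tsupport ψ ⊆ {v : Sph n | 0 < ⟪w, (v : En n)⟫}) :
    Ψ (M.join (w +ᵥ N)) ψ + Ψ (N.join (w +ᵥ N)) ψ
      = Ψ (K.join (w +ᵥ N)) ψ + Ψ (L.join (w +ᵥ N)) ψ := by
  set h : ConvexBody (En n) → En n → ℝ := fun X => suppFn (X : Set (En n)) with h_def
  set s : En n → ℝ := fun v => ⟪w, v⟫ + h N v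
  have hjoin (X : ConvexBody (En n)) (v : En n) : h (X.join (w +ᵥ N)) v = max (h X v) (s v) :=
    suppFn_join_vadd X N w v
  have hMv (v : En n) : h M v = max (h K v) (h L v) := by
    simp only [h_def, hM, suppFn_union K.isCompact K.nonempty L.isCompact L.nonempty]
  have hNv (v : En n) : h N v = min (h K v) (h L v) := by
    simp only [h_def, hN, suppFn_inter_of_convex_union K.isCompact K.nonempty L.isCompact
      L.nonempty (hM ▸ M.convex)]
  have hC (v : En n) : h (M.join (w +ᵥ N)) v
      = max (h (K.join (w +ᵥ N)) v) (h (L.join (w +ᵥ N)) v) := by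
    rw [hjoin, hjoin, hjoin, hMv, max_max_max_comm, max_self]
  have hD (v : En n) : h (N.join (w +ᵥ N)) v
      = min (h (K.join (w +ᵥ N)) v) (h (L.join (w +ᵥ N)) v) := by
    rw [hjoin, hjoin, hjoin, hNv, max_min_distrib_right]
  set U : ConvexBody (En n) → ConvexBody (En n) → Set (Sph n) :=
    fun A B => {v | h A v < h (B.join (w +ᵥ N)) v}
  have hU (A B : ConvexBody (En n)) : IsOpen (U A B) :=
    isOpen_lt ((continuous_suppFn A.isCompact).comp continuous_subtype_val)
      ((continuous_suppFn (B.join (w +ᵥ N)).isCompact).comp continuous_subtype_val)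
  have hle (A B : ConvexBody (En n)) :
      ∀ v ∈ U A B, h (A.join (w +ᵥ N)) v ≤ h (B.join (w +ᵥ N)) v := fun v hv => by
    rw [hjoin A]
    exact max_le hv.le ((le_max_right _ _).trans (hjoin B v).ge)
  have hcover : tsupport ψ ⊆ ⋃ b, cond b (U L K) (U K L) := by
    rw [← union_eq_iUnion]
    intro v hv
    by_contra hvU
    simp only [U, mem_union, mem_ofPred_eq, not_or, not_lt, hjoin, max_le_iff] at hvU
    have hw : 0 < ⟪w, (v : En n)⟫ := hψ hv
    have hNK : h N v = h K v := by rw [hNv, min_eq_left hvU.1.1]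
    linarith [hvU.1.2]
  refine map_eq_map_of_tsupport_subset_iUnion (Ψ (M.join (w +ᵥ N)) + Ψ (N.join (w +ᵥ N)))
    (Ψ (K.join (w +ᵥ N)) + Ψ (L.join (w +ᵥ N))) (fun b => by cases b <;> exact hU _ _) ?_ hcover
  rintro (_ | _) φ hφ
  · exact (hΨ.add_eq_of_suppFn_le (fun v => (hC v).trans (max_comm _ _))
      (fun v => (hD v).trans (min_comm _ _)) (hU K L) (hle K L) hφ).trans (add_comm _ _)
  · exact hΨ.add_eq_of_suppFn_le hC hD (hU L K) (hle L K) hφ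

theorem add_eq_of_tsupport_subset_halfSpace (hcont : WeakContinuous Ψ)
    (hloc : LocallyDetermined Ψ) {K L M N : ConvexBody (En n)}
    (hM : (M : Set (En n)) = (K : Set (En n)) ∪ L) (hN : (N : Set (En n)) = (K : Set (En n)) ∩ L)
    {u : En n} {ψ : C(Sph n, ℂ)} (hψ : tsupport ψ ⊆ {v : Sph n | 0 < ⟪u, (v : En n)⟫}) :
    Ψ M ψ + Ψ N ψ = Ψ K ψ + Ψ L ψ := by
  have hlim (X : ConvexBody (En n)) (hX : (N : Set (En n)) ⊆ X) :
      Tendsto (fun t : ℝ => Ψ (X.join ((t • u) +ᵥ N)) ψ) (𝓝[>] 0) (𝓝 (Ψ X ψ)) :=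
    ((hcont ψ).tendsto X).comp <| (ConvexBody.tendsto_join_vadd hX).comp <|
      ((continuous_id.smul continuous_const).tendsto' 0 0 (zero_smul ℝ u)).mono_left
        nhdsWithin_le_nhds
  have hNK : (N : Set (En n)) ⊆ K := hN ▸ inter_subset_left
  have hNL : (N : Set (En n)) ⊆ L := hN ▸ inter_subset_right
  refine tendsto_nhds_unique (((hlim M (hM ▸ hNK.trans subset_union_left)).add
    (hlim N subset_rfl)).congr' ?_) ((hlim K hNK).add (hlim L hNL))
  filter_upwards [self_mem_nhdsWithin] with t (ht : 0 < t)
  refine hloc.add_eq_join_vadd hM hN (hψ.trans fun v hv => ?_)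
  simpa only [mem_ofPred_eq, real_inner_smul_left] using mul_pos ht hv

end Valuation

theorem valuation_of_weakContinuous_locallyDetermined_general (n : ℕ)
    (Ψ : AreaFun n) (hcont : WeakContinuous Ψ) (hloc : LocallyDetermined Ψ)
    (K L : ConvexBody (En n)) (hconv : Convex ℝ ((K : Set (En n)) ∪ (L : Set (En n)))) :
    ∃ hne : ((K : Set (En n)) ∩ (L : Set (En n))).Nonempty,
      ∀ φ : C(Sph n, ℂ),
        Ψ ⟨(K : Set (En n)) ∪ (L : Set (En n)), hconv, K.isCompact.union L.isCompact,
            K.nonempty.mono Set.subset_union_left⟩ φ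
          + Ψ ⟨(K : Set (En n)) ∩ (L : Set (En n)), K.convex.inter L.convex,
              K.isCompact.inter_right L.isClosed, hne⟩ φ
          = Ψ K φ + Ψ L φ := by
  obtain ⟨x, hx⟩ := K.nonempty
  obtain ⟨z, hz⟩ := L.nonempty
  obtain ⟨y, -, hy⟩ := hconv.exists_mem_segment_inter_of_union K.isClosed L.isClosed hx hz
  refine ⟨⟨y, hy⟩, fun φ => map_eq_map_of_tsupport_subset_iUnion (Ψ _ + Ψ _) (Ψ K + Ψ L)
    (U := fun u : Sph n => {v : Sph n | 0 < ⟪(u : En n), v⟫}) (fun u => ?_)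
    (fun u ψ hψ => add_eq_of_tsupport_subset_halfSpace hcont hloc rfl rfl hψ) fun v _ => ?_⟩
  · exact isOpen_lt continuous_const (by fun_prop)
  · refine mem_iUnion.2 ⟨v, ?_⟩
    simp

/-- A weak*-continuous and locally determined measure-valued functional is a
valuation: if `K ∪ L` is convex then `K ∩ L` is nonempty and
`Ψ(K ∪ L) + Ψ(K ∩ L) = Ψ(K) + Ψ(L)`. -/
theorem valuation_of_weakContinuous_locallyDetermined (n : ℕ) (hn : 1 ≤ n)
    (Ψ : AreaFun n) (hcont : WeakContinuous Ψ) (hloc : LocallyDetermined Ψ)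
    (K L : ConvexBody (En n)) (hconv : Convex ℝ ((K : Set (En n)) ∪ (L : Set (En n)))) :
    ∃ hne : ((K : Set (En n)) ∩ (L : Set (En n))).Nonempty,
      ∀ φ : C(Sph n, ℂ),
        Ψ ⟨(K : Set (En n)) ∪ (L : Set (En n)), hconv, K.isCompact.union L.isCompact,
            K.nonempty.mono Set.subset_union_left⟩ φ
          + Ψ ⟨(K : Set (En n)) ∩ (L : Set (En n)), K.convex.inter L.convex,
              K.isCompact.inter_right L.isClosed, hne⟩ φ
          = Ψ K φ + Ψ L φ :=
  valuation_of_weakContinuous_locallyDetermined_general n Ψ hcont hloc K L hconv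
end
end

section
/- Let Ψ : K(ℝ^n) → C(S^{n-1},ℂ)' be weak*-continuous and locally determined. Suppose Ψ(P) = 0 for every polytope P ⊆ ℝ^n (convex hull of a nonempty finite set) whose dimension (the dimension of its affine span) is at most n−1. Then Ψ(K) = 0 for every convex body K ∈ K(ℝ^n). -/
/-!
Near each direction `u`, the support function of a polytope `P` coincides with that of the face
of `P` exposed by `u`, a polytope of dimension at most `n - 1`. Hence, by local determinacy,
`Ψ(P; φ) = 0` for every `φ` supported near `u`, and a partition of unity on the sphere gives
`Ψ(P) = 0`. Convex hulls of finite `ε`-nets show that polytopes are dense in `K(ℝⁿ)`, so weak*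
continuity extends the vanishing to every convex body.
-/

open scoped RealInnerProductSpace Pointwise
open Metric

noncomputable section

open Topology

section LocalVanishing

variable {X 𝕜 M F : Type*} [TopologicalSpace X] [CompactSpace X] [T2Space X] [RCLike 𝕜]
  [AddCommMonoid M] [FunLike F C(X, 𝕜) M] [AddMonoidHomClass F C(X, 𝕜) M]

theorem map_eq_zero_of_locally_eq_zero (Λ : F)
    (h : ∀ x, ∃ U, IsOpen U ∧ x ∈ U ∧ ∀ φ : C(X, 𝕜), tsupport φ ⊆ U → Λ φ = 0)
    (φ : C(X, 𝕜)) : Λ φ = 0 := by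
  choose U hUo hxU hU using h
  obtain ⟨t, ht⟩ := isCompact_univ.elim_finite_subcover U hUo
    fun x _ => Set.mem_iUnion.2 ⟨x, hxU x⟩
  obtain ⟨ρ, hρ⟩ := PartitionOfUnity.exists_isSubordinate isClosed_univ (fun i : t => U i)
    (fun i => hUo i) fun x _ => by simpa using ht (Set.mem_univ x)
  have hsum : φ = ∑ i, ρ i • φ := by
    ext x
    have h1 : ∑ i, ρ i x = 1 := by
      rw [← finsum_eq_sum_of_fintype]; exact ρ.sum_eq_one (Set.mem_univ x)
    simp only [ContinuousMap.coe_sum, Finset.sum_apply, ContinuousMap.smul_apply',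
      ← Finset.sum_smul, h1, one_smul]
  rw [hsum, map_sum]
  exact Finset.sum_eq_zero fun i _ => hU i _ ((tsupport_smul_subset_left _ _).trans (hρ i))

end LocalVanishing

section ExposedFace

variable {E : Type*} [NormedAddCommGroup E] [InnerProductSpace ℝ E]

open Classical in
def exposedFace (S : Finset E) (v : E) : Finset E :=
  S.filter fun x => ∀ y ∈ S, ⟪y, v⟫ ≤ ⟪x, v⟫

theorem exposedFace_subset (S : Finset E) (v : E) : exposedFace S v ⊆ S :=
  Finset.filter_subset _ _

theorem mem_exposedFace {S : Finset E} {v x : E} :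
    x ∈ exposedFace S v ↔ x ∈ S ∧ ∀ y ∈ S, ⟪y, v⟫ ≤ ⟪x, v⟫ := by
  classical
  simp only [exposedFace, Finset.mem_filter]

theorem exposedFace_nonempty {S : Finset E} (hS : S.Nonempty) (v : E) :
    (exposedFace S v).Nonempty := by
  obtain ⟨x, hx, hmax⟩ := S.exists_max_image (⟪·, v⟫) hS
  exact ⟨x, mem_exposedFace.2 ⟨hx, hmax⟩⟩

/-- Points of `S` off the face are strictly dominated at `v`, an open condition in `v`. -/
theorem eventually_exists_mem_exposedFace_inner_le {S : Finset E} (hS : S.Nonempty) (v : E) :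
    ∀ᶠ w in 𝓝 v, ∀ x ∈ S, ∃ y ∈ exposedFace S v, ⟪x, w⟫ ≤ ⟪y, w⟫ := by
  obtain ⟨y₀, hy₀⟩ := exposedFace_nonempty hS v
  refine (Filter.eventually_all_finset S).2 fun x hx => ?_
  by_cases hxF : x ∈ exposedFace S v
  · exact Filter.Eventually.of_forall fun w => ⟨x, hxF, le_rfl⟩
  · obtain ⟨y, hy, hxy⟩ : ∃ y ∈ S, ⟪x, v⟫ < ⟪y, v⟫ := by
      simpa [mem_exposedFace, hx] using hxF
    have hlt : ⟪x, v⟫ < ⟪y₀, v⟫ := hxy.trans_le ((mem_exposedFace.1 hy₀).2 y hy)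
    filter_upwards [(continuous_const.inner continuous_id).continuousAt.eventually_lt
      (continuous_const.inner continuous_id).continuousAt hlt] with w hw
    exact ⟨y₀, hy₀, hw.le⟩

theorem vectorSpan_convexHull_exposedFace_le (S : Finset E) (v : E) :
    vectorSpan ℝ (convexHull ℝ (exposedFace S v : Set E)) ≤ (ℝ ∙ v)ᗮ := by
  rw [← direction_affineSpan, affineSpan_convexHull, direction_affineSpan, vectorSpan_def,
    Submodule.span_le]
  rintro _ ⟨x, hx, y, hy, rfl⟩
  have hxy : ⟪x, v⟫ = ⟪y, v⟫ :=
    le_antisymm ((mem_exposedFace.1 hy).2 x (mem_exposedFace.1 hx).1)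
      ((mem_exposedFace.1 hx).2 y (mem_exposedFace.1 hy).1)
  rw [SetLike.mem_coe, Submodule.mem_orthogonal_singleton_iff_inner_right, real_inner_comm]
  change ⟪x - y, v⟫ = 0
  rw [inner_sub_left, hxy, sub_self]

theorem finrank_vectorSpan_convexHull_exposedFace_lt [FiniteDimensional ℝ E] (S : Finset E)
    {v : E} (hv : v ≠ 0) :
    Module.finrank ℝ (vectorSpan ℝ (convexHull ℝ (exposedFace S v : Set E))) <
      Module.finrank ℝ E := by
  refine Submodule.finrank_lt fun htop => hv ?_
  have hmem : v ∈ (ℝ ∙ v)ᗮ := vectorSpan_convexHull_exposedFace_le S v (htop ▸ Submodule.mem_top)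
  simpa using Submodule.inner_right_of_mem_orthogonal (Submodule.mem_span_singleton_self v) hmem

end ExposedFace

namespace ConvexBody

variable {E : Type*} [NormedAddCommGroup E] [NormedSpace ℝ E]

def IsPolytope (K : ConvexBody E) : Prop :=
  ∃ S : Finset E, S.Nonempty ∧ (K : Set E) = convexHull ℝ (S : Set E)

def ofFinset (S : Finset E) (hS : S.Nonempty) : ConvexBody E where
  carrier := convexHull ℝ (S : Set E)
  convex' := convex_convexHull ℝ _
  isCompact' := S.finite_toSet.isCompact_convexHull ℝ
  nonempty' := hS.to_set.convexHull

theorem isPolytope_ofFinset (S : Finset E) (hS : S.Nonempty) : (ofFinset S hS).IsPolytope :=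
  ⟨S, hS, rfl⟩

theorem exists_isPolytope_dist_le (K : ConvexBody E) {ε : ℝ} (hε : 0 < ε) :
    ∃ P : ConvexBody E, P.IsPolytope ∧ dist P K ≤ ε := by
  obtain ⟨t, htK, htfin, hcover⟩ := K.isCompact.finite_cover_balls hε
  have htne : htfin.toFinset.Nonempty := by
    obtain ⟨x, hx⟩ := K.nonempty
    obtain ⟨c, hc, -⟩ := Set.mem_iUnion₂.1 (hcover hx)
    exact ⟨c, htfin.mem_toFinset.2 hc⟩
  have hPK : convexHull ℝ (htfin.toFinset : Set E) ⊆ K := by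
    rw [htfin.coe_toFinset]
    exact convexHull_min htK K.convex
  refine ⟨ofFinset _ htne, isPolytope_ofFinset _ htne, ?_⟩
  rw [← hausdorffDist_coe]
  refine Metric.hausdorffDist_le_of_mem_dist hε.le (fun x hx => ⟨x, hPK hx, by simpa using hε.le⟩)
    fun x hx => ?_
  obtain ⟨c, hc, hxc⟩ := Set.mem_iUnion₂.1 (hcover hx)
  exact ⟨c, subset_convexHull ℝ _ (htfin.mem_toFinset.2 hc), (Metric.mem_ball.1 hxc).le⟩

theorem dense_setOf_isPolytope : Dense {K : ConvexBody E | K.IsPolytope} := by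
  refine Metric.dense_iff.2 fun K r hr => ?_
  obtain ⟨P, hP, hPK⟩ := exists_isPolytope_dist_le K (half_pos hr)
  exact ⟨P, Metric.mem_ball.2 (hPK.trans_lt (half_lt_self hr)), hP⟩

end ConvexBody

section SupportFunction

variable {n : ℕ}

theorem suppFn_convexHull_eq_inner {S : Set (En n)} {v x₀ : En n} (hx₀ : x₀ ∈ S)
    (hmax : ∀ y ∈ S, ⟪y, v⟫ ≤ ⟪x₀, v⟫) : suppFn (convexHull ℝ S) v = ⟪x₀, v⟫ := by
  refine IsGreatest.csSup_eq ⟨Set.mem_image_of_mem _ (subset_convexHull ℝ S hx₀), ?_⟩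
  rintro _ ⟨x, hx, rfl⟩
  obtain ⟨y, hy, hxy⟩ :=
    ((innerₛₗ ℝ v).convexOn convex_univ).exists_ge_of_mem_convexHull (Set.subset_univ S) hx
  simp only [innerₛₗ_apply_apply, real_inner_comm _ v] at hxy
  exact hxy.trans (hmax y hy)

theorem eventually_suppFn_convexHull_eq_exposedFace {S : Finset (En n)} (hS : S.Nonempty)
    (v : En n) : ∀ᶠ w in 𝓝 v,
      suppFn (convexHull ℝ (S : Set (En n))) w =
        suppFn (convexHull ℝ (exposedFace S v : Set (En n))) w := by
  filter_upwards [eventually_exists_mem_exposedFace_inner_le hS v] with w hw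
  obtain ⟨x, hx, hxmax⟩ := S.exists_max_image (⟪·, w⟫) hS
  obtain ⟨y, hyF, hxy⟩ := hw x hx
  have hymax : ∀ z ∈ S, ⟪z, w⟫ ≤ ⟪y, w⟫ := fun z hz => (hxmax z hz).trans hxy
  rw [suppFn_convexHull_eq_inner (Finset.mem_coe.2 (exposedFace_subset S v hyF)) hymax,
    suppFn_convexHull_eq_inner (Finset.mem_coe.2 hyF)
      fun z hz => hymax z (exposedFace_subset S v hz)]

end SupportFunction

theorem apply_eq_zero_of_isPolytope {n : ℕ} {Ψ : AreaFun n} (hloc : LocallyDetermined Ψ)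
    (hpoly : ∀ K : ConvexBody (En n), K.IsPolytope →
      Module.finrank ℝ (vectorSpan ℝ (K : Set (En n))) ≤ n - 1 → ∀ φ : C(Sph n, ℂ), Ψ K φ = 0)
    {P : ConvexBody (En n)} (hP : P.IsPolytope) (φ : C(Sph n, ℂ)) : Ψ P φ = 0 := by
  obtain ⟨S, hS, hPS⟩ := hP
  refine map_eq_zero_of_locally_eq_zero (Ψ P) (fun u => ?_) φ
  set F := ConvexBody.ofFinset (exposedFace S u) (exposedFace_nonempty hS u)
  have hFdim : Module.finrank ℝ (vectorSpan ℝ (F : Set (En n))) ≤ n - 1 := by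
    have := finrank_vectorSpan_convexHull_exposedFace_lt S (ne_of_mem_sphere u.2 one_ne_zero)
    rw [finrank_euclideanSpace_fin] at this
    exact Nat.le_sub_one_of_lt this
  have hPF : ∀ᶠ w in 𝓝 (u : En n), suppFn (P : Set (En n)) w = suppFn (F : Set (En n)) w := by
    rw [hPS]
    exact eventually_suppFn_convexHull_eq_exposedFace hS (u : En n)
  set V : Set (Sph n) := {w | suppFn (P : Set (En n)) w = suppFn (F : Set (En n)) w}
  have hV : interior V ∈ 𝓝 u :=
    interior_mem_nhds.2 ((continuous_subtype_val.tendsto u).eventually hPF)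
  refine ⟨interior V, isOpen_interior, mem_of_mem_nhds hV, fun ψ hψ => ?_⟩
  rw [hloc P F ψ _ isOpen_interior (fun w hw => (interior_subset hw : w ∈ V)) hψ]
  exact hpoly F (ConvexBody.isPolytope_ofFinset _ _) hFdim ψ

theorem vanishes_of_vanishes_on_lower_dim_polytopes_general (n : ℕ)
    (Ψ : AreaFun n) (hcont : WeakContinuous Ψ) (hloc : LocallyDetermined Ψ)
    (hpoly : ∀ K : ConvexBody (En n),
      (∃ S : Finset (En n), S.Nonempty ∧ (K : Set (En n)) = convexHull ℝ (S : Set (En n))) →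
      Module.finrank ℝ (vectorSpan ℝ (K : Set (En n))) ≤ n - 1 →
      ∀ φ : C(Sph n, ℂ), Ψ K φ = 0) :
    ∀ (K : ConvexBody (En n)) (φ : C(Sph n, ℂ)), Ψ K φ = 0 := by
  intro K φ
  exact congrFun (Continuous.ext_on ConvexBody.dense_setOf_isPolytope (hcont φ) continuous_const
    fun P hP => apply_eq_zero_of_isPolytope hloc hpoly hP φ) K

/-- A weak*-continuous, locally determined measure-valued functional vanishing on
all polytopes of dimension at most `n-1` vanishes identically. -/
theorem vanishes_of_vanishes_on_lower_dim_polytopes (n : ℕ) (hn : 1 ≤ n)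
    (Ψ : AreaFun n) (hcont : WeakContinuous Ψ) (hloc : LocallyDetermined Ψ)
    (hpoly : ∀ K : ConvexBody (En n),
      (∃ S : Finset (En n), S.Nonempty ∧ (K : Set (En n)) = convexHull ℝ (S : Set (En n))) →
      Module.finrank ℝ (vectorSpan ℝ (K : Set (En n))) ≤ n - 1 →
      ∀ φ : C(Sph n, ℂ), Ψ K φ = 0) :
    ∀ (K : ConvexBody (En n)) (φ : C(Sph n, ℂ)), Ψ K φ = 0 :=
  vanishes_of_vanishes_on_lower_dim_polytopes_general n Ψ hcont hloc hpoly
end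
end

section
/- Let K, L be convex bodies in ℝ^n such that K ∪ L is convex, let ε > 0, and let B₁(0) be the closed unit ball. Define K_ε = conv(K ∪ ((K∩L) + εB₁(0))) and L_ε = conv(L ∪ ((K∩L) + εB₁(0))), where + denotes the Minkowski sum and conv the convex hull. Then K_ε ∩ L_ε = (K ∩ L) + εB₁(0). -/
open scoped RealInnerProductSpace Pointwise
open Metric

noncomputable section

/-- If `K ∪ L` is convex and `K, L` are closed, every segment from a point of `K` to a
point of `L` meets `K ∩ L`. -/
lemma seg_meets {E : Type*} [NormedAddCommGroup E] [NormedSpace ℝ E]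
    {K L : Set E} (hK : IsClosed K) (hL : IsClosed L)
    (hconv : Convex ℝ (K ∪ L)) {a c : E} (ha : a ∈ K) (hc : c ∈ L) :
    ∃ m ∈ segment ℝ a c, m ∈ K ∩ L := by
  have hseg : segment ℝ a c ⊆ K ∪ L :=
    hconv.segment_subset (Set.mem_union_left _ ha) (Set.mem_union_right _ hc)
  have hpre : IsPreconnected (segment ℝ a c) :=
    (convex_segment a c).isPreconnected
  have := isPreconnected_closed_iff.mp hpre K L hK hL hseg
    ⟨a, left_mem_segment ℝ a c, ha⟩ ⟨c, right_mem_segment ℝ a c, hc⟩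
  obtain ⟨m, hm, hmKL⟩ := this
  exact ⟨m, hm, hmKL⟩

/-- For convex bodies `K, L` with `K ∪ L` convex and `ε > 0`, setting
`K_ε = conv(K ∪ ((K∩L) + εB₁(0)))` and `L_ε = conv(L ∪ ((K∩L) + εB₁(0)))`, one has
`K_ε ∩ L_ε = (K ∩ L) + εB₁(0)`. -/
theorem inter_of_eps_bodies (n : ℕ) (hn : 1 ≤ n) (K L : ConvexBody (En n))
    (hconv : Convex ℝ ((K : Set (En n)) ∪ (L : Set (En n)))) (ε : ℝ) (hε : 0 < ε) :
    convexHull ℝ ((K : Set (En n)) ∪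
        (((K : Set (En n)) ∩ (L : Set (En n))) + ε • closedBall (0 : En n) 1)) ∩
      convexHull ℝ ((L : Set (En n)) ∪
        (((K : Set (En n)) ∩ (L : Set (En n))) + ε • closedBall (0 : En n) 1))
      = ((K : Set (En n)) ∩ (L : Set (En n))) + ε • closedBall (0 : En n) 1 := by
  set M : Set (En n) := (K : Set (En n)) ∩ (L : Set (En n)) with hM
  set B : Set (En n) := M + ε • closedBall (0 : En n) 1 with hB
  -- basic facts
  have hKc : IsCompact (K : Set (En n)) := K.isCompact
  have hLc : IsCompact (L : Set (En n)) := L.isCompact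
  have hMne : M.Nonempty := by
    obtain ⟨a, ha⟩ := K.nonempty
    obtain ⟨c, hc⟩ := L.nonempty
    obtain ⟨m, _, hm⟩ := seg_meets hKc.isClosed hLc.isClosed hconv ha hc
    exact ⟨m, hm⟩
  have h0ball : (0 : En n) ∈ ε • closedBall (0 : En n) 1 :=
    ⟨0, by simp, by simp⟩
  have hMB : M ⊆ B := fun m hm => ⟨m, hm, 0, h0ball, by simp⟩
  have hBne : B.Nonempty := hMne.mono hMB
  have hMcomp : IsCompact M := hKc.inter_right hLc.isClosed
  have hMconv : Convex ℝ M := K.convex.inter L.convex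
  have hballcomp : IsCompact (ε • closedBall (0 : En n) 1) :=
    (isCompact_closedBall 0 1).smul ε
  have hBcomp : IsCompact B := hMcomp.add hballcomp
  have hBconv : Convex ℝ B :=
    hMconv.add ((convex_closedBall (0 : En n) 1).smul ε)
  have hBclosed : IsClosed B := hBcomp.isClosed
  apply Set.eq_of_subset_of_subset
  · rintro x ⟨hxK, hxL⟩
    by_contra hxB
    -- separate x from B
    obtain ⟨f, u, hfu, hux⟩ := geometric_hahn_banach_closed_point hBconv hBclosed hxB
    -- decompose x from both convex hulls
    rw [K.convex.convexHull_union hBconv K.nonempty hBne, mem_convexJoin] at hxK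
    rw [L.convex.convexHull_union hBconv L.nonempty hBne, mem_convexJoin] at hxL
    obtain ⟨a, ha, b, hb, t1, t2, ht1, ht2, ht, hx1⟩ := hxK
    obtain ⟨c, hc, d, hd, s1, s2, hs1, hs2, hs, hx2⟩ := hxL
    -- f a ≥ f x
    have key : ∀ (p q : En n) (r1 r2 : ℝ), 0 ≤ r1 → 0 ≤ r2 → r1 + r2 = 1 →
        q ∈ B → r1 • p + r2 • q = x → f x ≤ f p := by
      intro p q r1 r2 hr1 hr2 hr hq hx
      by_contra hlt
      push_neg at hlt
      have hfq : f q < f x := lt_trans (hfu q hq) hux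
      have hfx : f x = r1 * f p + r2 * f q := by
        rw [← hx]; simp [mul_comm]
      rcases eq_or_lt_of_le hr1 with h1 | h1
      · have : r2 = 1 := by linarith
        have : f x = f q := by rw [hfx, ← h1, this]; ring
        linarith
      · have : r1 * f p < r1 * f x := by
          exact (mul_lt_mul_iff_right₀ h1).mpr hlt
        have h2 : r2 * f q ≤ r2 * f x := by
          rcases eq_or_lt_of_le hr2 with h2 | h2
          · rw [← h2]; ring_nf; rfl
          · exact le_of_lt ((mul_lt_mul_iff_right₀ h2).mpr hfq)
        have hsum : r1 * f x + r2 * f x = f x := by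
          rw [← add_mul, hr, one_mul]
        linarith
    have hfa : f x ≤ f a := key a b t1 t2 ht1 ht2 ht hb hx1
    have hfc : f x ≤ f c := key c d s1 s2 hs1 hs2 hs hd hx2
    -- segment from a to c meets M
    obtain ⟨m, hmseg, hmM⟩ := seg_meets hKc.isClosed hLc.isClosed hconv ha hc
    obtain ⟨r1, r2, hr1, hr2, hr, hmeq⟩ := hmseg
    have hfm : f x ≤ f m := by
      have heq : f m = r1 * f a + r2 * f c := by rw [← hmeq]; simp [mul_comm]
      have hsum : r1 * f x + r2 * f x = f x := by rw [← add_mul, hr, one_mul]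
      nlinarith [mul_le_mul_of_nonneg_left hfa hr1, mul_le_mul_of_nonneg_left hfc hr2]
    have : f m < f x := lt_trans (hfu m (hMB hmM)) hux
    linarith
  · intro x hx
    constructor
    · exact subset_convexHull ℝ _ (Set.mem_union_right _ hx)
    · exact subset_convexHull ℝ _ (Set.mem_union_right _ hx)
end
end

section
/- Let K, L be convex bodies in ℝ^n such that K ∪ L is convex, let ε > 0, and let B₁(0) be the closed unit ball. Define K_ε = conv(K ∪ ((K∩L) + εB₁(0))) and L_ε = conv(L ∪ ((K∩L) + εB₁(0))). Then K_ε ∪ L_ε = conv((K ∪ L) ∪ ((K∩L) + εB₁(0))); in particular K_ε ∪ L_ε is convex. -/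
open scoped RealInnerProductSpace Pointwise
open Metric

noncomputable section

/-- **Statement 12.** For convex bodies `K, L` with `K ∪ L` convex and `ε > 0`, setting
`K_ε = conv(K ∪ ((K∩L) + εB₁(0)))` and `L_ε = conv(L ∪ ((K∩L) + εB₁(0)))`, one has
`K_ε ∪ L_ε = conv((K ∪ L) ∪ ((K∩L) + εB₁(0)))`; in particular `K_ε ∪ L_ε` is convex. -/
theorem union_of_eps_bodies (n : ℕ) (hn : 1 ≤ n) (K L : ConvexBody (En n))
    (hconv : Convex ℝ ((K : Set (En n)) ∪ (L : Set (En n)))) (ε : ℝ) (hε : 0 < ε) :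
    (convexHull ℝ ((K : Set (En n)) ∪
        (((K : Set (En n)) ∩ (L : Set (En n))) + ε • closedBall (0 : En n) 1)) ∪
      convexHull ℝ ((L : Set (En n)) ∪
        (((K : Set (En n)) ∩ (L : Set (En n))) + ε • closedBall (0 : En n) 1))
      = convexHull ℝ (((K : Set (En n)) ∪ (L : Set (En n))) ∪
          (((K : Set (En n)) ∩ (L : Set (En n))) + ε • closedBall (0 : En n) 1)))
    ∧ Convex ℝ
        (convexHull ℝ ((K : Set (En n)) ∪
            (((K : Set (En n)) ∩ (L : Set (En n))) + ε • closedBall (0 : En n) 1)) ∪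
          convexHull ℝ ((L : Set (En n)) ∪
            (((K : Set (En n)) ∩ (L : Set (En n))) + ε • closedBall (0 : En n) 1))) := by
  set M : Set (En n) := ((K : Set (En n)) ∩ (L : Set (En n))) + ε • closedBall (0 : En n) 1
    with hMdef
  have hMconv : Convex ℝ M := by
    exact ((K.convex.inter L.convex).add ((convex_closedBall (0 : En n) 1).smul ε))
  have key : convexHull ℝ ((K : Set (En n)) ∪ M) ∪ convexHull ℝ ((L : Set (En n)) ∪ M)
      = convexHull ℝ (((K : Set (En n)) ∪ (L : Set (En n))) ∪ M) := by
    rcases M.eq_empty_or_nonempty with hM | hM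
    · rw [hM]
      simp only [Set.union_empty]
      rw [K.convex.convexHull_eq, L.convex.convexHull_eq, hconv.convexHull_eq]
    · apply Set.Subset.antisymm
      · apply Set.union_subset <;> apply convexHull_mono <;>
          exact Set.union_subset_union_left M (by intro x hx; simp [hx])
      · rw [hconv.convexHull_union hMconv (K.nonempty.mono Set.subset_union_left) hM]
        intro x hx
        rcases mem_convexJoin.mp hx with ⟨a, ha, b, hb, hseg⟩
        rcases ha with ha | ha
        · left
          rw [K.convex.convexHull_union hMconv K.nonempty hM]
          exact mem_convexJoin.mpr ⟨a, ha, b, hb, hseg⟩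
        · right
          rw [L.convex.convexHull_union hMconv L.nonempty hM]
          exact mem_convexJoin.mpr ⟨a, ha, b, hb, hseg⟩
  refine ⟨key, ?_⟩
  rw [key]
  exact convex_convexHull ℝ _
end
end
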